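/- Let X be a simple graph with bounded degree and t a complex number. The operators C_m(t) on ℓ²(VX) satisfy the recurrence: C_2(t) = C_1(t)² − (1−t)(Q_X + I), and for m ≥ 3, C_m(t) = C_{m−1}(t) C_1(t) − (1−t) C_{m−2}(t) Q_X(t). -/

import Mathlib

open scoped BigOperators
open SimpleGraph

noncomputable section

namespace BZ

open Classical

variable {V : Type*} (G : SimpleGraph V)

/-- Bump count of a walk: the number of indices `i` with `e_i = ē_{i+1}`. -/
def bc {x y : V} (w : G.Walk x y) : ℕ :=
  ((w.darts.zip w.darts.tail).filter fun p => p.2 = p.1.symm).length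

/-- A closed walk has a tail if `e_m = ē_1` (with `m ≥ 1`). -/
def hasTail {x : V} (w : G.Walk x x) : Prop :=
  1 ≤ w.length ∧ w.darts.getLast? = w.darts.head?.map SimpleGraph.Dart.symm

/-- Cyclic bump count of a closed walk: `cbc = bc + 1` if the walk has a tail, else `bc`. -/
def cbc {x : V} (w : G.Walk x x) : ℕ :=
  bc G w + if hasTail G w then 1 else 0

/-- `C_m(t)(x, y)`: the weighted count `∑ t^{bc(C)}` over walks from `x` to `y` of length `m`. -/
def Cent (t : ℂ) (m : ℕ) (x y : V) : ℂ :=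
  ∑' w : {w : G.Walk x y // w.length = m}, t ^ bc G w.1

/-- `α(t) = (M + √(M² + 4(|t|+1)M))/2`, where `M` bounds the degrees. -/
def alpha (M : ℕ) (t : ℂ) : ℝ :=
  ((M : ℝ) + Real.sqrt ((M : ℝ) ^ 2 + 4 * (‖t‖ + 1) * (M : ℝ))) / 2

/-- The `ℓ²`-space on the vertex set `V`. -/
abbrev L2V (V : Type*) := lp (fun _ : V => ℂ) 2

/-
Entrywise, `(C_{m-1} A)(x, y)` weighs each walk `w` of length `m` from `x` to `y` by `t ^ bc` of
`w` without its last step. That weight lacks a factor `t` exactly when the last two steps of `w`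
form a bump, `w = u · (y → z) · (z → y)` with `u` of length `m - 2`. Summing over the `deg y`
choices of `z`, one of which (the penultimate vertex of `u`, when `m ≥ 3`) also makes a bump with
`u`, gives the correction `(1 - t) (deg y - (1 - t) [m ≥ 3]) C_{m-2}(x, y)`; for `m = 2` use
`C_0 = I`.
-/

lemma zip_tail_append_singleton {α : Type*} (l : List α) (a : α) :
    (l ++ [a]).zip (l ++ [a]).tail = l.zip l.tail ++ (l.getLast?.map (·, a)).toList := by
  induction l with
  | nil => simp
  | cons x xs ih => cases xs <;> simp_all

lemma pow_add_ite {R : Type*} [CommRing R] (t : R) (b : ℕ) (c : Prop) [Decidable c] :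
    t ^ (b + if c then 1 else 0) = t ^ b - (1 - t) * if c then t ^ b else 0 := by
  split_ifs <;> ring

variable {G}

lemma getLast?_darts_eq_some_iff {x y z : V} (w : G.Walk x y) (h : G.Adj z y) :
    w.darts.getLast? = some ⟨(z, y), h⟩ ↔ ¬w.Nil ∧ w.penultimate = z := by
  by_cases hw : w.Nil
  · simp [hw, Walk.darts_eq_nil.mpr hw]
  · rw [List.getLast?_eq_some_getLast (Walk.darts_eq_nil.not.mpr hw),
      Walk.getLast_darts_eq_lastDart, Option.some.injEq, Dart.ext_iff]
    simp [hw]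

lemma not_nil_concat {x y z : V} (w : G.Walk x y) (h : G.Adj y z) : ¬(w.concat h).Nil :=
  Walk.not_nil_iff_lt_length.mpr (by simp)

variable [DecidableEq V]

theorem bc_concat {x y z : V} (w : G.Walk x y) (h : G.Adj y z) :
    bc G (w.concat h) = bc G w + if ¬w.Nil ∧ w.penultimate = z then 1 else 0 := by
  simp only [← getLast?_darts_eq_some_iff w h.symm, bc, Walk.darts_concat, List.concat_eq_append,
    zip_tail_append_singleton, List.filter_append, List.length_append]
  congr 1
  cases w.darts.getLast? with
  | none => simp
  | some d =>
    have hbump : (⟨(y, z), h⟩ : G.Dart) = d.symm ↔ d = ⟨(z, y), h.symm⟩ :=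
      eq_comm.trans Dart.symm_involutive.eq_iff
    by_cases hd : d = ⟨(z, y), h.symm⟩ <;> simp [hbump, hd]

theorem bc_concat_concat {x y y' z : V} (u : G.Walk x y') (h' : G.Adj y' z) (h : G.Adj z y) :
    bc G ((u.concat h').concat h) = bc G (u.concat h') + if y' = y then 1 else 0 := by
  simp [bc_concat _ h, not_nil_concat]

section LocallyFinite

variable [G.LocallyFinite]

theorem sum_walk_length_succ {M : Type*} [AddCommMonoid M] {x y : V} (n : ℕ)
    (f : G.Walk x y → M) :
    ∑ w : {w : G.Walk x y // w.length = n + 1}, f w.1 =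
      ∑ z : G.neighborSet y, ∑ w : {w : G.Walk x z // w.length = n},
        f (w.1.concat ((G.mem_neighborSet y z).1 z.2).symm) := by
  let concatLast (p : Σ z : G.neighborSet y, {w : G.Walk x z // w.length = n}) :
      {w : G.Walk x y // w.length = n + 1} :=
    ⟨p.2.1.concat ((G.mem_neighborSet y p.1).1 p.1.2).symm, by simp [p.2.2]⟩
  refine ((Fintype.sum_bijective concatLast ⟨?_, ?_⟩ _ _ fun _ => rfl).symm).trans
    (Fintype.sum_sigma _)
  · rintro ⟨⟨z, hz⟩, ⟨w, hw⟩⟩ ⟨⟨z', hz'⟩, ⟨w', hw'⟩⟩ he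
    simp only [concatLast, Subtype.mk.injEq] at he
    obtain ⟨rfl, rfl⟩ := Walk.concat_inj he
    rfl
  · rintro ⟨w, hw⟩
    have hnil : ¬w.Nil := Walk.not_nil_iff_lt_length.mpr (by omega)
    exact ⟨⟨⟨w.penultimate, G.adj_symm (Walk.adj_penultimate hnil)⟩,
      ⟨w.dropLast, by simp [hw]⟩⟩, Subtype.ext (Walk.concat_dropLast _)⟩

lemma sum_neighborSet_ite_eq' {M : Type*} [AddCommMonoid M] {y v : V}
    (hv : v ∈ G.neighborSet y) (f : G.neighborSet y → M) :
    ∑ z : G.neighborSet y, (if (z : V) = v then f z else 0) = f ⟨v, hv⟩ := by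
  rw [Fintype.sum_eq_single ⟨v, hv⟩ fun z hz => if_neg fun e => hz (Subtype.ext e), if_pos rfl]

lemma sum_neighborSet_ite_eq {M : Type*} [AddCommMonoid M] (x y : V) (c : M) :
    ∑ z : G.neighborSet y, (if x = (z : V) then c else 0) = if G.Adj x y then c else 0 := by
  split_ifs with h
  · simp_rw [eq_comm (a := x)]
    exact sum_neighborSet_ite_eq' h.symm fun _ => c
  · refine Finset.sum_eq_zero fun z _ => if_neg fun e => h ?_
    rw [e]
    exact ((G.mem_neighborSet y z).1 z.2).symm

lemma Cent_eq_sum (t : ℂ) (m : ℕ) (x y : V) :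
    Cent G t m x y = ∑ w : {w : G.Walk x y // w.length = m}, t ^ bc G w.1 :=
  tsum_fintype _

lemma Cent_zero (t : ℂ) (x y : V) : Cent G t 0 x y = if x = y then 1 else 0 := by
  rw [Cent_eq_sum]
  split_ifs with h
  · subst h
    have hnil (w : {w : G.Walk x x // w.length = 0}) : w = ⟨Walk.nil, rfl⟩ :=
      Subtype.ext (Walk.eq_nil_iff_nil.mpr (Walk.length_eq_zero_iff.mp w.2))
    rw [Fintype.sum_eq_single _ fun w hw => (hw (hnil w)).elim]
    simp [bc]
  · have : IsEmpty {w : G.Walk x y // w.length = 0} :=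
      ⟨fun w => h (Walk.eq_of_length_eq_zero w.2)⟩
    simp

lemma Cent_one (t : ℂ) (x y : V) : Cent G t 1 x y = if G.Adj x y then 1 else 0 := by
  have hnil (z : V) (w : {w : G.Walk x z // w.length = 0}) : w.1.Nil :=
    Walk.length_eq_zero_iff.mp w.2
  rw [Cent_eq_sum, show 1 = 0 + 1 from rfl, sum_walk_length_succ 0 fun w => t ^ bc G w]
  simp only [bc_concat, hnil, not_true_eq_false, false_and, if_false, add_zero, ← Cent_eq_sum,
    Cent_zero, sum_neighborSet_ite_eq]

lemma sum_pow_bc_concat (t : ℂ) {x y : V} (u : G.Walk x y) :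
    ∑ z : G.neighborSet y, t ^ bc G (u.concat ((G.mem_neighborSet y z).1 z.2)) =
      t ^ bc G u * (G.degree y - if u.Nil then 0 else 1 - t) := by
  simp only [bc_concat, pow_add_ite, Finset.sum_sub_distrib, ← Finset.mul_sum, Finset.sum_const,
    Finset.card_univ, card_neighborSet_eq_degree, nsmul_eq_mul]
  by_cases hu : u.Nil
  · simp [hu, mul_comm]
  · simp only [hu, not_false_eq_true, true_and, if_false, sum_neighborSet_ite_eq,
      if_pos (Walk.adj_penultimate hu)]
    ring

theorem Cent_add_two (t : ℂ) (k : ℕ) (x y : V) :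
    Cent G t (k + 2) x y = ∑ z : G.neighborSet y, Cent G t (k + 1) x z
      - (1 - t) * (G.degree y - if k = 0 then 0 else 1 - t) * Cent G t k x y := by
  have hbump (z : G.neighborSet y) :
      ∑ v : {v : G.Walk x z // v.length = k + 1},
          t ^ bc G (v.1.concat ((G.mem_neighborSet y z).1 z.2).symm) =
        Cent G t (k + 1) x z - (1 - t) * ∑ u : {u : G.Walk x y // u.length = k},
          t ^ bc G (u.1.concat ((G.mem_neighborSet y z).1 z.2)) := by
    have hy : y ∈ G.neighborSet z := ((G.mem_neighborSet y z).1 z.2).symm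
    rw [sum_walk_length_succ k fun v => t ^ bc G (v.concat ((G.mem_neighborSet y z).1 z.2).symm),
      Cent_eq_sum, sum_walk_length_succ k fun w => t ^ bc G w]
    simp only [bc_concat_concat, pow_add_ite, Finset.sum_sub_distrib, ← Finset.mul_sum,
      ← Finset.ite_sum_zero]
    rw [sum_neighborSet_ite_eq' hy fun y' => ∑ u : {u : G.Walk x y' // u.length = k},
      t ^ bc G (u.1.concat ((G.mem_neighborSet z y').1 y'.2).symm)]
  have hnil (u : {u : G.Walk x y // u.length = k}) : u.1.Nil ↔ k = 0 := by
    rw [← Walk.length_eq_zero_iff, u.2]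
  rw [Cent_eq_sum, show k + 2 = k + 1 + 1 from rfl, sum_walk_length_succ _ fun w => t ^ bc G w]
  simp only [hbump, Finset.sum_sub_distrib, ← Finset.mul_sum]
  rw [Finset.sum_comm]
  simp only [sum_pow_bc_concat, hnil, ← Finset.sum_mul, ← Cent_eq_sum]
  ring

lemma single_one_apply (x y : V) : (lp.single 2 y (1 : ℂ) : L2V V) x = if x = y then 1 else 0 :=
  Pi.single_apply y 1 x

theorem ext_single {F : Type*} [AddCommMonoid F] [Module ℂ F] [TopologicalSpace F] [T2Space F]
    {T S : L2V V →L[ℂ] F} (h : ∀ y : V, T (lp.single 2 y 1) = S (lp.single 2 y 1)) : T = S :=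
  lp.ext_continuousLinearMap (by norm_num) fun y =>
    ContinuousLinearMap.ext_ring (by simpa using h y)

lemma apply_single_eq_sum_neighborSet {A : L2V V →L[ℂ] L2V V}
    (hA : ∀ x y : V, A (lp.single 2 y 1) x = if G.Adj x y then 1 else 0) (y : V) :
    A (lp.single 2 y 1) = ∑ z : G.neighborSet y, lp.single 2 (z : V) 1 := by
  ext x
  simp only [hA, lp.coeFn_sum, Finset.sum_apply, single_one_apply, sum_neighborSet_ite_eq]

lemma apply_single_eq_degree_smul {D : L2V V →L[ℂ] L2V V}
    (hD : ∀ x y : V, D (lp.single 2 y 1) x = if x = y then (G.degree x : ℂ) else 0) (y : V) :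
    D (lp.single 2 y 1) = (G.degree y : ℂ) • lp.single 2 y 1 := by
  ext x
  rw [hD, lp.coeFn_smul, Pi.smul_apply, single_one_apply, smul_eq_mul]
  split_ifs with h
  · rw [h, mul_one]
  · rw [mul_zero]

end LocallyFinite

theorem Cop_recurrence_general {V : Type*} [DecidableEq V] (G : SimpleGraph V)
    [G.LocallyFinite]
    (t : ℂ)
    (Cop : ℕ → (L2V V →L[ℂ] L2V V)) (Dop : L2V V →L[ℂ] L2V V)
    (hCop : ∀ (m : ℕ) (x y : V), (Cop m (lp.single 2 y 1)) x = Cent G t m x y)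
    (hDop : ∀ x y : V, (Dop (lp.single 2 y 1)) x = if x = y then (G.degree x : ℂ) else 0) :
    Cop 2 = Cop 1 * Cop 1 - (1 - t) • ((Dop - 1) + 1) ∧
      ∀ m : ℕ, 3 ≤ m →
        Cop m = Cop (m - 1) * Cop 1 - (1 - t) • (Cop (m - 2) * (Dop - (1 - t) • 1)) := by
  have hA := apply_single_eq_sum_neighborSet fun x y => (hCop 1 x y).trans (Cent_one t x y)
  have hD := apply_single_eq_degree_smul hDop
  have hC0 : Cop 0 = 1 := ext_single fun y => by
    ext x
    rw [hCop, Cent_zero, one_apply_eq_self, single_one_apply]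
  have hrec (k : ℕ) : Cop (k + 2) = Cop (k + 1) * Cop 1 -
      (1 - t) • (Cop k * (Dop - (if k = 0 then 0 else 1 - t) • 1)) := by
    refine ext_single fun y => ?_
    ext x
    simp only [sub_apply, smul_apply, mul_apply_eq_comp, one_apply_eq_self, hA, hD, map_sum,
      map_smul, map_sub, lp.coeFn_sub, lp.coeFn_smul, lp.coeFn_sum, Finset.sum_apply,
      Pi.sub_apply, Pi.smul_apply, smul_eq_mul, hCop, Cent_add_two]
    ring
  refine ⟨by simpa [hC0] using hrec 0, fun m hm => ?_⟩
  obtain ⟨k, rfl⟩ := Nat.exists_eq_add_of_le' hm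
  simpa using hrec (k + 1)

/-- For a simple graph with bounded degree, the operators `C_m(t)` satisfy the recurrence
`C_2(t) = C_1(t)² − (1−t)(Q_X + I)` and, for `m ≥ 3`,
`C_m(t) = C_{m−1}(t) C_1(t) − (1−t) C_{m−2}(t) Q_X(t)`, where `Q_X = D_X − I` and
`Q_X(t) = D_X − (1−t)I`. -/
theorem Cop_recurrence {V : Type*} [DecidableEq V] (G : SimpleGraph V)
    [G.LocallyFinite] (M : ℕ) (hM : ∀ v : V, G.degree v ≤ M)
    (t : ℂ)
    (Cop : ℕ → (L2V V →L[ℂ] L2V V)) (Dop : L2V V →L[ℂ] L2V V)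
    (hCop : ∀ (m : ℕ) (x y : V), (Cop m (lp.single 2 y 1)) x = Cent G t m x y)
    (hDop : ∀ x y : V, (Dop (lp.single 2 y 1)) x = if x = y then (G.degree x : ℂ) else 0) :
    Cop 2 = Cop 1 * Cop 1 - (1 - t) • ((Dop - 1) + 1) ∧
      ∀ m : ℕ, 3 ≤ m →
        Cop m = Cop (m - 1) * Cop 1 - (1 - t) • (Cop (m - 2) * (Dop - (1 - t) • 1)) :=
  Cop_recurrence_general G t Cop Dop hCop hDop

end BZ
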